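/- For every boolean function f : {0,1}^n → {0,1} with wt(f) ≤ 4 log₂ n, D_ave(f) ≤ 40. -/

import Mathlib

/-- Decision trees over `n` boolean variables. -/
inductive DTree (n : ℕ) : Type where
  | leaf : Bool → DTree n
  | node : Fin n → DTree n → DTree n → DTree n

namespace DTree

/-- Evaluate a decision tree on an input. -/
def eval {n : ℕ} : DTree n → (Fin n → Bool) → Bool
  | leaf b, _ => b
  | node i t0 t1, x => if x i then eval t1 x else eval t0 x

/-- Number of queries made on input `x`. -/
def cost {n : ℕ} : DTree n → (Fin n → Bool) → ℕ
  | leaf _, _ => 0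
  | node i t0 t1, x => 1 + (if x i then cost t1 x else cost t0 x)

/-- Depth of a decision tree. -/
def depth {n : ℕ} : DTree n → ℕ
  | leaf _ => 0
  | node _ t0 t1 => 1 + max (depth t0) (depth t1)

end DTree

/-- `T` computes `f` with zero error. -/
def Computes {n : ℕ} (T : DTree n) (f : (Fin n → Bool) → Bool) : Prop :=
  ∀ x, T.eval x = f x

/-- Average cost of a decision tree under the uniform distribution. -/
noncomputable def avgCost {n : ℕ} (T : DTree n) : ℝ :=
  (∑ x : Fin n → Bool, (T.cost x : ℝ)) / 2 ^ n

/-- Average-case deterministic query complexity under the uniform distribution. -/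
noncomputable def Dave {n : ℕ} (f : (Fin n → Bool) → Bool) : ℝ :=
  sInf {c : ℝ | ∃ T : DTree n, Computes T f ∧ avgCost T = c}

/-- Worst-case deterministic query complexity. -/
noncomputable def Dworst {n : ℕ} (f : (Fin n → Bool) → Bool) : ℕ :=
  sInf {d : ℕ | ∃ T : DTree n, Computes T f ∧ T.depth = d}

/-- The weight of a boolean function: the number of inputs mapped to `true`. -/
def wt {n : ℕ} (f : (Fin n → Bool) → Bool) : ℕ :=
  (Finset.univ.filter fun x : Fin n → Bool => f x = true).card

/-- `S` is a certificate of `f` on input `x`. -/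
def IsCert {n : ℕ} (f : (Fin n → Bool) → Bool) (x : Fin n → Bool) (S : Finset (Fin n)) : Prop :=
  ∀ y : Fin n → Bool, (∀ i ∈ S, y i = x i) → f y = f x

/-- Certificate complexity of `f` on input `x`. -/
noncomputable def certC {n : ℕ} (f : (Fin n → Bool) → Bool) (x : Fin n → Bool) : ℕ :=
  sInf {k : ℕ | ∃ S : Finset (Fin n), IsCert f x S ∧ S.card = k}

/-- The weight of the subfunction `f|ρ`, where `ρ : Fin n → Option Bool` is a restriction:
the number of inputs consistent with `ρ` on which `f` outputs `true`. -/
def wtR {n : ℕ} (f : (Fin n → Bool) → Bool) (ρ : Fin n → Option Bool) : ℕ :=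
  (Finset.univ.filter fun x : Fin n → Bool =>
    f x = true ∧ ∀ i : Fin n, ∀ b : Bool, ρ i = some b → x i = b).card

/-- Number of coordinates fixed by a restriction. -/
def suppCard {n : ℕ} (ρ : Fin n → Option Bool) : ℕ :=
  (Finset.univ.filter fun i : Fin n => (ρ i).isSome).card

/-- The restriction given by the first `j` steps of a decision-tree path `L`. -/
def PathRho {n : ℕ} (L : List (Fin n × Bool)) (j : ℕ) : Fin n → Option Bool :=
  fun i => (L.take j).lookup i

/-- The path `L` is `δ`-parity with respect to `f`. -/
def DeltaParityPath {n : ℕ} (f : (Fin n → Bool) → Bool) (δ : ℝ)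
    (L : List (Fin n × Bool)) : Prop :=
  ∀ j : ℕ, 1 ≤ j → j ≤ L.length →
    (1/2) * (1 - δ) * (wtR f (PathRho L (j-1)) : ℝ) ≤ (wtR f (PathRho L j) : ℝ) ∧
    (wtR f (PathRho L j) : ℝ) ≤ (1/2) * (1 + δ) * (wtR f (PathRho L (j-1)) : ℝ)

/-- `f` is a `(t,δ)`-parity function: every path of length at most `t` is δ-parity. -/
def ParityFun {n : ℕ} (f : (Fin n → Bool) → Bool) (t : ℕ) (δ : ℝ) : Prop :=
  ∀ L : List (Fin n × Bool), (L.map Prod.fst).Nodup → L.length ≤ t → DeltaParityPath f δ L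

/-- The subfunction `f|ρ`, viewed as a function on the full cube. -/
def restrictFun {n : ℕ} (f : (Fin n → Bool) → Bool) (ρ : Fin n → Option Bool) :
    (Fin n → Bool) → Bool :=
  fun x => f fun i => (ρ i).getD (x i)

/-- Probability mass of the restriction `ρ` under the `p`-random restriction `R_p`. -/
noncomputable def rpMass {n : ℕ} (p : ℝ) (ρ : Fin n → Option Bool) : ℝ :=
  ∏ i : Fin n, if (ρ i).isSome then (1 - p) / 2 else p

/-- `f` is `λ`-critical. -/
def IsCritical {n : ℕ} (lam : ℝ) (f : (Fin n → Bool) → Bool) : Prop :=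
  ∀ p : ℝ, 0 ≤ p → p ≤ 1 → ∀ t : ℕ,
    (∑ ρ : Fin n → Option Bool,
      if t ≤ Dworst (restrictFun f ρ) then rpMass p ρ else 0) ≤ (p * lam) ^ t

/-!
Only the at most `w = wt f` inputs on which `f` is `1` have to be ruled out. Querying coordinates
one by one and stopping as soon as no `1`-input is consistent with the answers costs at most `w + 1`
queries on average, which settles the case `log₂ n < 7`. Otherwise let `t = ⌊log₂ n⌋ - 3`, so that
`w ≤ 8 t` and `5 · 2 ^ t ≤ n`. While more than `2 ^ t` coordinates are free, pigeonhole gives two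
free coordinates on which `t` of the surviving `1`-inputs (or all of them) agree; querying both
costs `2` queries and with probability `1/2` the answers differ and eliminate those inputs. At most
`8` such successes are needed, which gives the bound `40`.
-/

open Finset

theorem two_nsmul_sum_filter_apply_eq {ι M : Type*} [Fintype ι] [DecidableEq ι]
    [AddCommMonoid M] {g : (ι → Bool) → M} {i : ι}
    (hg : ∀ x b, g (Function.update x i b) = g x) (b : Bool) :
    2 • ∑ x with x i = b, g x = ∑ x, g x := by
  rw [← sum_filter_add_sum_filter_not univ (fun x => x i = b), two_nsmul]
  congr 1
  refine sum_nbij' (fun x => Function.update x i (!b)) (fun x => Function.update x i b)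
    ?_ ?_ ?_ ?_ fun x _ => (hg x !b).symm
  · intro x _; simp
  · intro x _; simp
  · intro x hx
    rw [mem_filter] at hx
    rw [Function.update_idem, ← hx.2, Function.update_eq_self]
  · intro x hx
    have hx : x i = !b := by cases b <;> simpa using (mem_filter.1 hx).2
    rw [Function.update_idem, ← hx, Function.update_eq_self]

theorem erase_erase_ssubset {α : Type*} [DecidableEq α] {F : Finset α} {i j : α} (hi : i ∈ F) :
    (F.erase i).erase j ⊂ F :=
  (erase_subset _ _).trans_ssubset (erase_ssubset hi)

theorem card_compl_erase_erase {α : Type*} [Fintype α] [DecidableEq α] {F : Finset α}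
    {i j : α} (hi : i ∈ F) (hj : j ∈ F)
    (hij : i ≠ j) : #((F.erase i).erase j)ᶜ = #Fᶜ + 2 := by
  rw [compl_erase, compl_erase, card_insert_of_notMem, card_insert_of_notMem]
  · simpa using hi
  · simp [hij.symm, hj]

theorem card_filter_ne_le {ι β : Type*} [DecidableEq β] {t : ℕ} {A : Finset (ι → β)} {i j : ι}
    (hgood : min t #A ≤ #{z ∈ A | z i = z j}) {a b : β} (hab : a ≠ b) :
    #{z ∈ A | z i = a ∧ z j = b} ≤ #A - min t #A := by
  have hsub : {z ∈ A | z i = a ∧ z j = b} ⊆ {z ∈ A | ¬z i = z j} :=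
    monotone_filter_right A fun z _ ⟨hza, hzb⟩ => by rwa [hza, hzb]
  have := card_filter_add_card_filter_not (s := A) (fun z => z i = z j)
  have := card_le_card hsub
  omega

namespace DTree

variable {n : ℕ}

def queried : DTree n → Finset (Fin n)
  | leaf _ => ∅
  | node i t0 t1 => insert i (t0.queried ∪ t1.queried)

def query (i : Fin n) (g : Bool → DTree n) : DTree n :=
  node i (g false) (g true)

theorem eval_query (i : Fin n) (g : Bool → DTree n) (x : Fin n → Bool) :
    (query i g).eval x = (g (x i)).eval x := by
  cases h : x i <;> simp [query, eval, h]

theorem cost_query (i : Fin n) (g : Bool → DTree n) (x : Fin n → Bool) :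
    (query i g).cost x = 1 + (g (x i)).cost x := by
  cases h : x i <;> simp [query, cost, h]

theorem queried_query (i : Fin n) (g : Bool → DTree n) :
    (query i g).queried = insert i ((g false).queried ∪ (g true).queried) := rfl

theorem cost_update {T : DTree n} {i : Fin n} (h : i ∉ T.queried) (x : Fin n → Bool) (b : Bool) :
    T.cost (Function.update x i b) = T.cost x := by
  induction T with
  | leaf => rfl
  | node j t0 t1 ih0 ih1 =>
    simp only [queried, mem_insert, mem_union, not_or] at h
    simp only [cost, Function.update_of_ne (Ne.symm h.1), ih0 h.2.1, ih1 h.2.2]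

theorem avgCost_nonneg (T : DTree n) : 0 ≤ avgCost T := by
  unfold avgCost; positivity

theorem avgCost_leaf (b : Bool) : avgCost (leaf b : DTree n) = 0 := by
  simp [avgCost, cost]

theorem avgCost_le_of_cost_le {T : DTree n} {c : ℕ} (h : ∀ x, T.cost x ≤ c) :
    avgCost T ≤ c := by
  rw [avgCost, div_le_iff₀ (by positivity)]
  calc ∑ x, (T.cost x : ℝ) ≤ ∑ _x : Fin n → Bool, (c : ℝ) :=
        sum_le_sum fun x _ => by exact_mod_cast h x
    _ = c * 2 ^ n := by simp [mul_comm]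

theorem avgCost_query {i : Fin n} {g : Bool → DTree n} (h : ∀ b, i ∉ (g b).queried) :
    avgCost (query i g) = 1 + (avgCost (g false) + avgCost (g true)) / 2 := by
  have half : ∀ b, ∑ x with x i = b, ((g b).cost x : ℝ) = (∑ x, ((g b).cost x : ℝ)) / 2 := by
    intro b
    rw [← two_nsmul_sum_filter_apply_eq (fun x c => by rw [cost_update (h b)]) b, nsmul_eq_mul]
    ring
  have hsplit : ∑ x, ((query i g).cost x : ℝ)
      = 2 ^ n + ∑ x with x i = true, ((g true).cost x : ℝ)
          + ∑ x with x i = false, ((g false).cost x : ℝ) := by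
    simp only [query, cost, Nat.cast_add, Nat.cast_one, sum_add_distrib, Nat.cast_ite, sum_ite,
      Bool.not_eq_true, sum_const, card_univ, Fintype.card_bool, Fintype.card_pi, prod_const,
      Fintype.card_fin, nsmul_eq_mul, mul_one, Nat.cast_pow, Nat.cast_ofNat]
    ring
  simp only [avgCost, hsplit, half]
  field_simp
  ring

theorem avgCost_query_query {i j : Fin n} (hij : i ≠ j) {g : Bool → Bool → DTree n}
    (hi : ∀ a b, i ∉ (g a b).queried) (hj : ∀ a b, j ∉ (g a b).queried) :
    avgCost (query i fun a => query j (g a)) = 2 + (avgCost (g false false)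
      + avgCost (g false true) + avgCost (g true false) + avgCost (g true true)) / 4 := by
  rw [avgCost_query, avgCost_query (hj false), avgCost_query (hj true)]
  · ring
  · intro a
    simp [queried_query, hij, hi]

end DTree

theorem Dave_le_avgCost {n : ℕ} {f : (Fin n → Bool) → Bool} {T : DTree n}
    (hT : Computes T f) : Dave f ≤ avgCost T :=
  csInf_le ⟨0, by rintro c ⟨T', -, rfl⟩; exact T'.avgCost_nonneg⟩ ⟨T, hT, rfl⟩

section DecisionTrees

variable {n : ℕ}

open DTree

/-- On input `x`, `F` is the set of coordinates not queried yet and `A` the set of `1`-inputs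
of `f` still consistent with the answers. -/
def Tracks (f : (Fin n → Bool) → Bool) (F : Finset (Fin n)) (x : Fin n → Bool)
    (A : Finset (Fin n → Bool)) : Prop :=
  (∀ z ∈ A, f z = true ∧ ∀ k ∉ F, z k = x k) ∧ (f x = true → x ∈ A)

theorem Tracks.univ_filter (f : (Fin n → Bool) → Bool) (x : Fin n → Bool) :
    Tracks f univ x {z | f z = true} :=
  ⟨fun _ hz => ⟨(mem_filter.1 hz).2, fun k hk => absurd (mem_univ k) hk⟩,
    fun hx => mem_filter.2 ⟨mem_univ x, hx⟩⟩

theorem Tracks.filter {f : (Fin n → Bool) → Bool} {F G : Finset (Fin n)} {x : Fin n → Bool}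
    {A : Finset (Fin n → Bool)} (h : Tracks f F x A) {p : (Fin n → Bool) → Prop}
    [DecidablePred p] (hp : ∀ z, p z → ∀ k ∈ F, k ∉ G → z k = x k) (hx : p x) :
    Tracks f G x {z ∈ A | p z} := by
  refine ⟨fun z hz => ?_, fun hfx => mem_filter.2 ⟨h.2 hfx, hx⟩⟩
  obtain ⟨hzA, hpz⟩ := mem_filter.1 hz
  refine ⟨(h.1 z hzA).1, fun k hk => ?_⟩
  by_cases hkF : k ∈ F
  · exact hp z hpz k hkF hk
  · exact (h.1 z hzA).2 k hkF

theorem Tracks.eq_false_of_eq_empty {f : (Fin n → Bool) → Bool} {F : Finset (Fin n)}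
    {x : Fin n → Bool} (h : Tracks f F x ∅) : f x = false := by
  simpa using mt h.2

theorem Tracks.nonempty_iff {f : (Fin n → Bool) → Bool} {x : Fin n → Bool}
    {A : Finset (Fin n → Bool)} (h : Tracks f ∅ x A) : A.Nonempty ↔ f x = true := by
  refine ⟨fun ⟨z, hz⟩ => ?_, fun hx => ⟨x, h.2 hx⟩⟩
  obtain ⟨hfz, hzx⟩ := h.1 z hz
  rwa [show z = x from funext fun k => hzx k (notMem_empty k)] at hfz

def scanTree : List (Fin n) → Finset (Fin n → Bool) → DTree n
  | [], A => leaf (decide A.Nonempty)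
  | i :: l, A => if A = ∅ then leaf false else query i fun b => scanTree l {z ∈ A | z i = b}

theorem eval_scanTree {f : (Fin n → Bool) → Bool} {x : Fin n → Bool} (l : List (Fin n))
    {A : Finset (Fin n → Bool)} (h : Tracks f l.toFinset x A) :
    (scanTree l A).eval x = f x := by
  induction l generalizing A with
  | nil =>
    rw [scanTree, eval, Bool.eq_iff_iff, decide_eq_true_iff]
    exact h.nonempty_iff
  | cons i l ih =>
    rw [scanTree]
    split_ifs with hA
    · subst hA; exact h.eq_false_of_eq_empty.symm
    · rw [eval_query]
      refine ih (h.filter (fun z hz k hk hkl => ?_) rfl)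
      rw [List.toFinset_cons, mem_insert] at hk
      rcases hk with rfl | hk
      exacts [hz, absurd hk hkl]

theorem queried_scanTree_subset (l : List (Fin n)) (A : Finset (Fin n → Bool)) :
    (scanTree l A).queried ⊆ l.toFinset := by
  induction l generalizing A with
  | nil => simp [scanTree, queried]
  | cons i l ih =>
    rw [scanTree]
    split_ifs
    · simp [queried]
    · rw [queried_query, List.toFinset_cons]
      exact insert_subset_insert _ (union_subset (ih _) (ih _))

theorem cost_scanTree_le (l : List (Fin n)) (A : Finset (Fin n → Bool)) (x : Fin n → Bool) :
    (scanTree l A).cost x ≤ l.length := by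
  induction l generalizing A with
  | nil => simp [scanTree, cost]
  | cons i l ih =>
    rw [scanTree]
    split_ifs
    · simp [cost]
    · rw [cost_query, List.length_cons]
      linarith [ih {z ∈ A | z i = x i}]

theorem avgCost_scanTree_le {l : List (Fin n)} (hl : l.Nodup) (A : Finset (Fin n → Bool)) :
    avgCost (scanTree l A) ≤ (#A + min #A 1 : ℕ) := by
  induction l generalizing A with
  | nil => rw [scanTree, avgCost_leaf]; positivity
  | cons i l ih =>
    rw [scanTree]
    split_ifs with hA
    · rw [avgCost_leaf]; positivity
    · have hi : i ∉ l.toFinset := by simpa using (List.nodup_cons.1 hl).1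
      rw [avgCost_query fun b hb => hi (queried_scanTree_subset l _ hb)]
      have hl' := (List.nodup_cons.1 hl).2
      have hcard : #{z ∈ A | z i = false} + #{z ∈ A | z i = true} = #A := by
        simpa using card_filter_add_card_filter_not (s := A) (fun z => z i = false)
      have hpos : 0 < #A := card_pos.2 (nonempty_iff_ne_empty.2 hA)
      set s₀ := #{z ∈ A | z i = false}
      set s₁ := #{z ∈ A | z i = true}
      have key :
          (2 : ℝ) + (s₀ + min s₀ 1 : ℕ) + (s₁ + min s₁ 1 : ℕ) ≤ 2 * (#A + min #A 1 : ℕ) := by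
        exact_mod_cast (by omega : 2 + (s₀ + min s₀ 1) + (s₁ + min s₁ 1) ≤ 2 * (#A + min #A 1))
      linarith [ih hl' {z ∈ A | z i = false}, ih hl' {z ∈ A | z i = true}]

/-- Querying a good pair eliminates at least `min t #A` candidates with probability `1/2`. -/
def IsGoodPair (t : ℕ) (F : Finset (Fin n)) (A : Finset (Fin n → Bool)) (p : Fin n × Fin n) :
    Prop :=
  p.1 ∈ F ∧ p.2 ∈ F ∧ p.1 ≠ p.2 ∧ min t #A ≤ #{z ∈ A | z p.1 = z p.2}

/-- Pigeonhole on the columns `i ↦ (z i)_{z ∈ B}` of `min t #A` candidates `B`. -/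
theorem exists_isGoodPair (t : ℕ) {F : Finset (Fin n)} (hF : 2 ^ t < #F)
    (A : Finset (Fin n → Bool)) : ∃ p, IsGoodPair t F A p := by
  obtain ⟨B, hBA, hB⟩ := exists_subset_card_eq (min_le_right t #A)
  have hcard : #(univ : Finset (B → Bool)) < #F := by
    refine lt_of_le_of_lt ?_ hF
    simpa [hB] using Nat.pow_le_pow_right two_pos (min_le_left t #A)
  obtain ⟨i, hi, j, hj, hij, hcol⟩ := exists_ne_map_eq_of_card_lt_of_maps_to hcard
    (f := fun i (z : B) => z.1 i) fun _ _ => mem_coe.2 (mem_univ _)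
  refine ⟨(i, j), hi, hj, hij, hB ▸ card_le_card fun z hz => ?_⟩
  exact mem_filter.2 ⟨hBA hz, congrFun hcol ⟨z, hz⟩⟩

open Classical in
noncomputable def pairTree (t : ℕ) (F : Finset (Fin n)) (A : Finset (Fin n → Bool)) : DTree n :=
  if A = ∅ then leaf false
  else if h : ∃ p, IsGoodPair t F A p then
    query h.choose.1 fun a => query h.choose.2 fun b =>
      pairTree t ((F.erase h.choose.1).erase h.choose.2)
        {z ∈ A | z h.choose.1 = a ∧ z h.choose.2 = b}
  else scanTree F.toList A
termination_by #F
decreasing_by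
  all_goals exact card_erase_le.trans_lt (card_erase_lt_of_mem h.choose_spec.1)

theorem eval_pairTree {f : (Fin n → Bool) → Bool} {x : Fin n → Bool} (t : ℕ)
    (F : Finset (Fin n)) {A : Finset (Fin n → Bool)} (h : Tracks f F x A) :
    (pairTree t F A).eval x = f x := by
  induction F using Finset.strongInduction generalizing A with
  | _ F ih =>
    rw [pairTree]
    split_ifs with hA hp
    · subst hA; exact h.eq_false_of_eq_empty.symm
    · obtain ⟨hi, -, -, -⟩ := hp.choose_spec
      rw [eval_query, eval_query]
      refine ih _ (erase_erase_ssubset hi) (h.filter (fun z hz k hk hk' => ?_) ⟨rfl, rfl⟩)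
      simp only [mem_erase, not_and_or, not_not] at hk'
      rcases hk' with rfl | rfl | hk'
      exacts [hz.2, hz.1, absurd hk hk']
    · exact eval_scanTree _ (by rwa [toList_toFinset])

theorem queried_pairTree_subset (t : ℕ) (F : Finset (Fin n)) (A : Finset (Fin n → Bool)) :
    (pairTree t F A).queried ⊆ F := by
  induction F using Finset.strongInduction generalizing A with
  | _ F ih =>
    rw [pairTree]
    split_ifs with hA hp
    · simp [queried]
    · obtain ⟨hi, hj, -, -⟩ := hp.choose_spec
      have hF := erase_erase_ssubset (j := hp.choose.2) hi
      have hsub : ∀ B, (pairTree t _ B).queried ⊆ F := fun B => (ih _ hF B).trans hF.subset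
      simp only [queried_query, insert_subset_iff, union_subset_iff]
      exact ⟨hi, ⟨hj, hsub _, hsub _⟩, hj, hsub _, hsub _⟩
    · simpa using queried_scanTree_subset F.toList A

/-- The potential: each good pair costs two queries and, with probability `1/2`, removes `t`
candidates (or all of them), which is worth `5` since `#A ≤ R * t`; each query also adds `1/4`
to the budget `#Fᶜ / 4` that pays for the final scan of at most `2 ^ t ≤ n / 5` coordinates. -/
theorem avgCost_pairTree_le {t : ℕ} (ht : 5 * 2 ^ t ≤ n) (F : Finset (Fin n))
    {A : Finset (Fin n → Bool)} {R : ℕ} (hA : #A ≤ R * t) :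
    avgCost (pairTree t F A) ≤ 5 * R + #Fᶜ / 4 := by
  induction F using Finset.strongInduction generalizing A R with
  | _ F ih =>
    rw [pairTree]
    split_ifs with h0 hp
    · rw [avgCost_leaf]; positivity
    · obtain ⟨hi, hj, hij, hgood⟩ := hp.choose_spec
      set i := hp.choose.1
      set j := hp.choose.2
      have hF := erase_erase_ssubset (j := j) hi
      have hq : ∀ a b, i ∉ (pairTree t ((F.erase i).erase j) {z ∈ A | z i = a ∧ z j = b}).queried
          ∧ j ∉ (pairTree t ((F.erase i).erase j) {z ∈ A | z i = a ∧ z j = b}).queried := by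
        exact fun a b => ⟨fun hmem => by simpa using queried_pairTree_subset _ _ _ hmem,
          fun hmem => by simpa using queried_pairTree_subset _ _ _ hmem⟩
      rw [avgCost_query_query hij (fun a b => (hq a b).1) (fun a b => (hq a b).2)]
      obtain ⟨R, rfl⟩ : ∃ R', R = R' + 1 := Nat.exists_eq_add_one.2 <| Nat.pos_of_ne_zero <| by
        rintro rfl
        exact h0 (card_eq_zero.1 (by simpa using hA))
      have hcompl : (#((F.erase i).erase j)ᶜ : ℝ) = #Fᶜ + 2 := by
        exact_mod_cast card_compl_erase_erase hi hj hij
      have same : ∀ a, avgCost (pairTree t ((F.erase i).erase j) {z ∈ A | z i = a ∧ z j = a})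
          ≤ 5 * (R + 1 : ℕ) + (#Fᶜ + 2) / 4 := fun a =>
        hcompl ▸ ih _ hF ((card_filter_le _ _).trans hA)
      have diff : ∀ a b, a ≠ b →
          avgCost (pairTree t ((F.erase i).erase j) {z ∈ A | z i = a ∧ z j = b})
            ≤ 5 * R + (#Fᶜ + 2) / 4 := fun a b hab =>
        hcompl ▸ ih _ hF ((card_filter_ne_le hgood hab).trans (by rw [add_mul] at hA; omega))
      linarith [Nat.cast_succ (R := ℝ) R, same false, same true, diff false true (by decide),
        diff true false (by decide)]
    · have hsmall : #F ≤ 2 ^ t := not_lt.1 fun hF => hp (exists_isGoodPair t hF A)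
      have hbudget : 4 * #F ≤ #Fᶜ := by
        rw [card_compl, Fintype.card_fin]
        omega
      have hscan := avgCost_le_of_cost_le (cost_scanTree_le F.toList A)
      rw [length_toList] at hscan
      have : (4 * #F : ℝ) ≤ #Fᶜ := by exact_mod_cast hbudget
      have : (0 : ℝ) ≤ R := Nat.cast_nonneg R
      linarith

end DecisionTrees

theorem wt_lt_of_le_four_mul_logb {n : ℕ} {f : (Fin n → Bool) → Bool}
    (h : (wt f : ℝ) ≤ 4 * Real.logb 2 n) : wt f < 4 * (Nat.log 2 n + 1) := by
  have hfloor := Real.natFloor_logb_natCast 2 n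
  rw [Nat.cast_ofNat] at hfloor
  have hlog := hfloor ▸ Nat.lt_floor_add_one (Real.logb 2 n)
  exact_mod_cast (show (wt f : ℝ) < 4 * (Nat.log 2 n + 1 : ℕ) by push_cast; linarith)

theorem stmt5 (n : ℕ) (f : (Fin n → Bool) → Bool)
    (h : (wt f : ℝ) ≤ 4 * Real.logb 2 n) :
    Dave f ≤ 40 := by
  have hw := wt_lt_of_le_four_mul_logb h
  rcases le_or_gt (Nat.log 2 n) 6 with hlog | hlog
  · calc Dave f ≤ avgCost (scanTree (List.finRange n) {z | f z = true}) :=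
          Dave_le_avgCost fun x => eval_scanTree _ (by simpa using Tracks.univ_filter f x)
      _ ≤ (wt f + min (wt f) 1 : ℕ) := avgCost_scanTree_le (List.nodup_finRange n) _
      _ ≤ 40 := by exact_mod_cast (by omega : wt f + min (wt f) 1 ≤ 40)
  · have ht : 5 * 2 ^ (Nat.log 2 n - 3) ≤ n :=
      calc 5 * 2 ^ (Nat.log 2 n - 3) ≤ 2 ^ 3 * 2 ^ (Nat.log 2 n - 3) := by gcongr; norm_num
        _ = 2 ^ Nat.log 2 n := by rw [← pow_add]; congr 1; omega
        _ ≤ n := Nat.pow_log_le_self 2 fun hn => by simp [hn] at hlog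
    calc Dave f ≤ avgCost (pairTree (Nat.log 2 n - 3) univ {z | f z = true}) :=
          Dave_le_avgCost fun x => eval_pairTree _ _ (Tracks.univ_filter f x)
      _ ≤ 5 * (8 : ℕ) + #(univ : Finset (Fin n))ᶜ / 4 :=
          avgCost_pairTree_le ht univ (show wt f ≤ 8 * (Nat.log 2 n - 3) by omega)
      _ = 40 := by norm_num
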